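/- Let n be a positive integer and let M be a positive-definite symmetric real 2n×2n matrix (indexed by Fin n × Fin 2). Then there exist a symplectic matrix S over ℝ and a function d : Fin n → ℝ with d i > 0 for all i, such that Sᵀ * M * S is the diagonal matrix whose entries at both (i,0) and (i,1) equal d i, for every i : Fin n. (In particular, every positive-definite symmetric matrix can be diagonalized by a symplectic matrix.) -/

import Mathlib

/-!
Write `M = Bᵀ B` with `B` invertible and put `V = B⁻¹`. The matrix `K = Vᵀ Ω V` is
skew-symmetric and invertible. An injective skew-symmetric operator on a real inner product
space has an orthonormal basis of pairs `(w i 0, w i 1)` with `K (w i 1) = μ i • w i 0`,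
`K (w i 0) = -μ i • w i 1`, `μ i > 0`: split off the plane spanned by a unit eigenvector `u` of
the positive operator `-K²` and by `K u`, whose orthogonal complement is again `K`-invariant,
and induct. In matrix form this is an orthogonal `O` with `Oᵀ K O = Ω diag(μ)`, and
`S = V O diag(μ^(-1/2))` is then symplectic with `Sᵀ M S = diag(μ⁻¹)`.
-/

open Matrix Module
open scoped RealInnerProductSpace

/-- The standard symplectic form on `ℝ^(2n)`, with indices `Fin n × Fin 2`. -/
def OmegaStd (n : ℕ) : Matrix (Fin n × Fin 2) (Fin n × Fin 2) ℝ :=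
  fun x y =>
    if x.1 = y.1 ∧ x.2 = 0 ∧ y.2 = 1 then 1
    else if x.1 = y.1 ∧ x.2 = 1 ∧ y.2 = 0 then -1
    else 0

theorem Orthonormal.uncurry_finCons {E : Type*} [NormedAddCommGroup E] [InnerProductSpace ℝ E]
    {κ : Type*} {m : ℕ} {p : κ → E} {w : Fin m × κ → E} (hp : Orthonormal ℝ p)
    (hw : Orthonormal ℝ w) (hpw : ∀ a b, ⟪p a, w b⟫ = 0) :
    Orthonormal ℝ (Function.uncurry (Fin.cons p (Function.curry w))) := by
  classical
  rw [orthonormal_iff_ite] at *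
  rintro ⟨i, a⟩ ⟨j, b⟩
  cases i using Fin.cases <;> cases j using Fin.cases <;>
    simp [hp, hw, hpw, real_inner_comm (p _), Prod.ext_iff, (Fin.succ_ne_zero _).symm]

namespace LinearMap

variable {E : Type*} [NormedAddCommGroup E] [InnerProductSpace ℝ E]

def IsSkewSymmetric (K : E →ₗ[ℝ] E) : Prop :=
  ∀ x y, ⟪K x, y⟫ = -⟪x, K y⟫

namespace IsSkewSymmetric

variable {K : E →ₗ[ℝ] E}

theorem inner_map_self_eq_zero (hK : K.IsSkewSymmetric) (x : E) : ⟪K x, x⟫ = 0 := by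
  have := hK x x
  rw [real_inner_comm (K x) x] at this
  linarith

theorem isSymmetric_neg_comp_self (hK : K.IsSkewSymmetric) : (-(K ∘ₗ K)).IsSymmetric := by
  intro x y
  simp only [neg_apply, comp_apply, inner_neg_left, inner_neg_right, hK (K x), hK x (K y), neg_neg]

theorem apply_mem_orthogonal (hK : K.IsSkewSymmetric) {P : Submodule ℝ E}
    (hP : ∀ p ∈ P, K p ∈ P) {x : E} (hx : x ∈ Pᗮ) : K x ∈ Pᗮ := by
  intro p hp
  rw [real_inner_comm, hK, real_inner_comm, hx _ (hP p hp), neg_zero]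

theorem restrict (hK : K.IsSkewSymmetric) {P : Submodule ℝ E} (hP : ∀ x ∈ P, K x ∈ P) :
    (K.restrict hP).IsSkewSymmetric :=
  fun x y => hK x y

theorem exists_orthonormal_pair [FiniteDimensional ℝ E] [Nontrivial E]
    (hK : K.IsSkewSymmetric) (hinj : Function.Injective K) :
    ∃ (p : Fin 2 → E) (μ : ℝ), 0 < μ ∧ Orthonormal ℝ p ∧
      K (p 1) = μ • p 0 ∧ K (p 0) = -μ • p 1 := by
  have hA := hK.isSymmetric_neg_comp_self
  let i : Fin (finrank ℝ E) := ⟨0, finrank_pos⟩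
  set u := hA.eigenvectorBasis rfl i
  set ν := hA.eigenvalues rfl i
  have hu : ‖u‖ = 1 := (hA.eigenvectorBasis rfl).orthonormal.1 i
  have hKKu : K (K u) = -ν • u := by
    have := (hA.hasEigenvector_eigenvectorBasis rfl i).apply_eq_smul
    simp only [neg_apply, comp_apply, RCLike.ofReal_real_eq_id, id_eq] at this
    rw [neg_smul, ← this, neg_neg]
  have hμ : 0 < ‖K u‖ := by
    refine norm_pos_iff.2 fun h => ?_
    have : u = 0 := hinj (h.trans (map_zero K).symm)
    simp [this] at hu
  have hν : ν = ‖K u‖ ^ 2 := by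
    have := hK (K u) u
    rw [hKKu, real_inner_smul_left, real_inner_self_eq_norm_sq, hu,
      real_inner_self_eq_norm_sq] at this
    linarith
  refine ⟨![‖K u‖⁻¹ • K u, u], ‖K u‖, hμ, ?_, ?_, ?_⟩
  · simp [norm_smul, hμ.ne', real_inner_smul_left, hK.inner_map_self_eq_zero, hu]
  · simp [smul_smul, hμ.ne']
  · simp only [Matrix.cons_val_zero, Matrix.cons_val_one, map_smul, hKKu, smul_smul, hν]
    field_simp

theorem exists_orthonormal_normal_form [FiniteDimensional ℝ E] (hK : K.IsSkewSymmetric)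
    (hinj : Function.Injective K) {m : ℕ} (hE : finrank ℝ E = 2 * m) :
    ∃ (w : Fin m × Fin 2 → E) (μ : Fin m → ℝ), Orthonormal ℝ w ∧ (∀ i, 0 < μ i) ∧
      (∀ i, K (w (i, 1)) = μ i • w (i, 0)) ∧ (∀ i, K (w (i, 0)) = -μ i • w (i, 1)) := by
  induction m generalizing E with
  | zero => exact ⟨finZeroElim ∘ Prod.fst, finZeroElim, .of_isEmpty _, finZeroElim, finZeroElim,
      finZeroElim⟩
  | succ m ih =>
    have : Nontrivial E := Module.nontrivial_of_finrank_pos (R := ℝ) (by omega)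
    obtain ⟨p, μ₀, hμ₀, hp, hp1, hp0⟩ := hK.exists_orthonormal_pair hinj
    set P := Submodule.span ℝ (Set.range p)
    have hP : ∀ x ∈ P, K x ∈ P := by
      refine fun x hx => Submodule.span_le (p := P.comap K) |>.2 ?_ hx
      rintro _ ⟨a, rfl⟩
      fin_cases a
      · simpa [hp0] using P.smul_mem (-μ₀) (Submodule.subset_span ⟨1, rfl⟩)
      · simpa [hp1] using P.smul_mem μ₀ (Submodule.subset_span ⟨0, rfl⟩)
    have hPperp : finrank ℝ Pᗮ = 2 * m := by
      have := P.finrank_add_finrank_orthogonal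
      rw [finrank_span_eq_card hp.linearIndependent, hE] at this
      simp only [Fintype.card_fin] at this
      omega
    obtain ⟨w, μ, hw, hμ, hw1, hw0⟩ := ih (hK.restrict (fun _ => hK.apply_mem_orthogonal hP))
      (fun x y h => Subtype.ext (hinj (congrArg Subtype.val h))) hPperp
    refine ⟨Function.uncurry (Fin.cons p (Function.curry (Subtype.val ∘ w))), Fin.cons μ₀ μ,
      hp.uncurry_finCons (hw.comp_linearIsometry Pᗮ.subtypeₗᵢ)
        (fun a b => (w b).2 _ (Submodule.subset_span ⟨a, rfl⟩)),
      Fin.cases hμ₀ hμ, Fin.cases hp1 fun i => congrArg Subtype.val (hw1 i),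
      Fin.cases hp0 fun i => congrArg Subtype.val (hw0 i)⟩

end IsSkewSymmetric

end LinearMap

namespace Matrix

variable {ι : Type*} [Fintype ι] [DecidableEq ι]

theorem isSkewSymmetric_toEuclideanLin {K : Matrix ι ι ℝ} (hK : Kᵀ = -K) :
    (toEuclideanLin K).IsSkewSymmetric := by
  intro x y
  rw [← LinearMap.adjoint_inner_right, ← toEuclideanLin_conjTranspose_eq_adjoint,
    conjTranspose_eq_transpose_of_trivial, hK, map_neg, LinearMap.neg_apply, inner_neg_right]

theorem injective_toEuclideanLin {K : Matrix ι ι ℝ} (hK : IsUnit K) :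
    Function.Injective (toEuclideanLin K) := fun x y h =>
  WithLp.ofLp_injective 2 <| mulVec_injective_iff_isUnit.2 hK <| by
    simpa using congrArg WithLp.ofLp h

theorem PosDef.exists_isUnit_transpose_mul_mul_eq_one {M : Matrix ι ι ℝ} (hM : M.PosDef) :
    ∃ V : Matrix ι ι ℝ, IsUnit V ∧ Vᵀ * M * V = 1 := by
  obtain ⟨B, hB, hMB⟩ : ∃ B, IsUnit B ∧ M = Bᵀ * B := by
    open scoped MatrixOrder in
    simpa [star_eq_conjTranspose] using
      CStarAlgebra.isStrictlyPositive_iff_eq_star_mul_self.mp hM.isStrictlyPositive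
  obtain ⟨V, hBV⟩ := hB.exists_right_inv
  refine ⟨V, .of_mul_eq_one_right B hBV, ?_⟩
  rw [hMB, mul_assoc, mul_assoc, hBV, mul_one, ← transpose_mul, hBV, transpose_one]

theorem transpose_mul_mul_apply_eq_inner {κ : Type*} (w : κ → EuclideanSpace ℝ ι)
    (A : Matrix ι ι ℝ) (x y : κ) :
    ((of fun a y => w y a)ᵀ * A * of fun a y => w y a) x y = ⟪w x, toEuclideanLin A (w y)⟫ := by
  simp only [mul_apply, transpose_apply, of_apply, Finset.sum_mul,
    EuclideanSpace.inner_eq_star_dotProduct, dotProduct, ofLp_toLpLin, toLin'_apply, mulVec,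
    Pi.star_apply, star_trivial]
  rw [Finset.sum_comm]
  exact Finset.sum_congr rfl fun _ _ => Finset.sum_congr rfl fun _ _ => by ring

end Matrix

section OmegaStd

variable {n : ℕ}

theorem omegaStd_apply_snd_zero (x : Fin n × Fin 2) (j : Fin n) :
    OmegaStd n x (j, 0) = if x = (j, 1) then -1 else 0 := by
  obtain ⟨i, a⟩ := x
  fin_cases a <;> simp [OmegaStd, Prod.ext_iff]

theorem omegaStd_apply_snd_one (x : Fin n × Fin 2) (j : Fin n) :
    OmegaStd n x (j, 1) = if x = (j, 0) then 1 else 0 := by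
  obtain ⟨i, a⟩ := x
  fin_cases a <;> simp [OmegaStd, Prod.ext_iff]

theorem omegaStd_transpose : (OmegaStd n)ᵀ = -OmegaStd n := by
  ext ⟨i, a⟩ ⟨j, b⟩
  fin_cases a <;> fin_cases b <;> simp [OmegaStd, eq_comm, neg_ite]

theorem omegaStd_mul_self : OmegaStd n * OmegaStd n = -1 := by
  ext x ⟨j, b⟩
  fin_cases b <;>
    simp [mul_apply, omegaStd_apply_snd_zero, omegaStd_apply_snd_one, one_apply, neg_ite]

theorem isUnit_omegaStd : IsUnit (OmegaStd n) :=
  .of_mul_eq_one (-OmegaStd n) (by simp [omegaStd_mul_self])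

theorem diagonal_fst_mul_omegaStd (f : Fin n → ℝ) :
    diagonal (fun x => f x.1) * OmegaStd n = OmegaStd n * diagonal (fun x => f x.1) := by
  ext x y
  rw [diagonal_mul, mul_diagonal]
  by_cases h : x.1 = y.1
  · rw [h, mul_comm]
  · simp [OmegaStd, h]

theorem diagonal_mul_omegaStd_mul_diagonal_mul_diagonal {c μ : Fin n → ℝ}
    (h : ∀ i, c i * μ i * c i = 1) :
    diagonal (fun x => c x.1) * (OmegaStd n * diagonal (fun x => μ x.1)) *
      diagonal (fun x => c x.1) = OmegaStd n := by
  rw [← mul_assoc, diagonal_fst_mul_omegaStd, mul_assoc, mul_assoc, diagonal_mul_diagonal,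
    diagonal_mul_diagonal]
  simp [← mul_assoc, h]

end OmegaStd

theorem exists_orthogonal_transpose_mul_mul_eq_omegaStd_mul_diagonal {n : ℕ}
    {K : Matrix (Fin n × Fin 2) (Fin n × Fin 2) ℝ} (hskew : Kᵀ = -K) (hK : IsUnit K) :
    ∃ (O : Matrix (Fin n × Fin 2) (Fin n × Fin 2) ℝ) (μ : Fin n → ℝ), Oᵀ * O = 1 ∧
      (∀ i, 0 < μ i) ∧ Oᵀ * K * O = OmegaStd n * diagonal (fun x => μ x.1) := by
  obtain ⟨w, μ, hw, hμ, hw1, hw0⟩ :=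
    (isSkewSymmetric_toEuclideanLin hskew).exists_orthonormal_normal_form
      (injective_toEuclideanLin hK) (m := n) (by simp [mul_comm])
  rw [orthonormal_iff_ite] at hw
  refine ⟨of fun a y => w y a, μ, ?_, hμ, ?_⟩
  · ext x y
    have := transpose_mul_mul_apply_eq_inner w 1 x y
    rw [mul_one] at this
    simpa [this, one_apply] using hw x y
  · ext x ⟨j, b⟩
    rw [transpose_mul_mul_apply_eq_inner, mul_diagonal]
    fin_cases b
    · simp [hw0, inner_smul_right, hw, omegaStd_apply_snd_zero, neg_ite]
    · simp [hw1, inner_smul_right, hw, omegaStd_apply_snd_one]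

theorem posdef_symplectic_diagonalization_general
    (n : ℕ)
    (M : Matrix (Fin n × Fin 2) (Fin n × Fin 2) ℝ) (hM : M.PosDef) :
    ∃ (S : Matrix (Fin n × Fin 2) (Fin n × Fin 2) ℝ) (d : Fin n → ℝ),
      Sᵀ * OmegaStd n * S = OmegaStd n ∧
      (∀ i : Fin n, 0 < d i) ∧
      Sᵀ * M * S = Matrix.diagonal (fun x : Fin n × Fin 2 => d x.1) := by
  obtain ⟨V, hV, hVMV⟩ := hM.exists_isUnit_transpose_mul_mul_eq_one
  obtain ⟨O, μ, hO, hμ, hOKO⟩ := exists_orthogonal_transpose_mul_mul_eq_omegaStd_mul_diagonal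
    (K := Vᵀ * OmegaStd n * V) (by simp [omegaStd_transpose, mul_assoc])
    (((isUnit_transpose V).2 hV).mul isUnit_omegaStd |>.mul hV)
  set c : Fin n → ℝ := fun i => (√(μ i))⁻¹
  have hc : ∀ i, c i * c i = (μ i)⁻¹ := fun i => by
    rw [← mul_inv, Real.mul_self_sqrt (hμ i).le]
  refine ⟨V * O * diagonal (fun x => c x.1), fun i => (μ i)⁻¹, ?_, fun i => inv_pos.2 (hμ i), ?_⟩
  · calc _ = diagonal (fun x => c x.1) * (Oᵀ * (Vᵀ * OmegaStd n * V) * O) *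
          diagonal (fun x => c x.1) := by simp [transpose_mul, mul_assoc]
      _ = OmegaStd n := by
        rw [hOKO]
        refine diagonal_mul_omegaStd_mul_diagonal_mul_diagonal fun i => ?_
        rw [mul_right_comm, hc, inv_mul_cancel₀ (hμ i).ne']
  · calc _ = diagonal (fun x => c x.1) * (Oᵀ * (Vᵀ * M * V) * O) *
          diagonal (fun x => c x.1) := by simp [transpose_mul, mul_assoc]
      _ = _ := by simp [hVMV, hO, hc]

/-- Weierstrass' theorem: every positive-definite symmetric real matrix can be
diagonalized by a symplectic matrix, with positive diagonal entries coming in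
equal pairs. -/
theorem posdef_symplectic_diagonalization
    (n : ℕ) (hn : 0 < n)
    (M : Matrix (Fin n × Fin 2) (Fin n × Fin 2) ℝ) (hM : M.PosDef) :
    ∃ (S : Matrix (Fin n × Fin 2) (Fin n × Fin 2) ℝ) (d : Fin n → ℝ),
      Sᵀ * OmegaStd n * S = OmegaStd n ∧
      (∀ i : Fin n, 0 < d i) ∧
      Sᵀ * M * S = Matrix.diagonal (fun x : Fin n × Fin 2 => d x.1) :=
  posdef_symplectic_diagonalization_general n M hM
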